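/- If S ∈ ℝ^{q×q} is marginally stable in the sense that there exists a positive definite P with P Sᵀ + S P ≤ 0 (negative semidefinite), and (C₀, S) is observable, then the matrix S − P C₀ᵀ C₀ (that is, S − L₀ C₀ with L₀ = P C₀ᵀ) is Hurwitz. -/

import Mathlib

open Matrix

namespace HurwitzAux

/-- Real part of the complex quadratic form of a real matrix. -/
lemma re_quad {n : ℕ} (N : Matrix (Fin n) (Fin n) ℝ) (v : Fin n → ℂ) :
    (star v ⬝ᵥ (N.map Complex.ofReal *ᵥ v)).re =
      (fun k => (v k).re) ⬝ᵥ (N *ᵥ fun k => (v k).re) +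
      (fun k => (v k).im) ⬝ᵥ (N *ᵥ fun k => (v k).im) := by
  simp only [dotProduct, mulVec, map_apply, Pi.star_apply]
  rw [Complex.re_sum, ← Finset.sum_add_distrib]
  refine Finset.sum_congr rfl fun j _ => ?_
  rw [Finset.mul_sum, Complex.re_sum, Finset.mul_sum, Finset.mul_sum, ← Finset.sum_add_distrib]
  refine Finset.sum_congr rfl fun k _ => ?_
  simp [Complex.mul_re, Complex.mul_im]

lemma re_quad_nonneg {n : ℕ} {N : Matrix (Fin n) (Fin n) ℝ} (hN : N.PosSemidef)
    (v : Fin n → ℂ) : 0 ≤ (star v ⬝ᵥ (N.map Complex.ofReal *ᵥ v)).re := by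
  rw [re_quad]
  have h1 := hN.dotProduct_mulVec_nonneg (fun k => (v k).re)
  have h2 := hN.dotProduct_mulVec_nonneg (fun k => (v k).im)
  simp only [star_trivial] at h1 h2
  exact add_nonneg h1 h2

lemma re_quad_pos {n : ℕ} {N : Matrix (Fin n) (Fin n) ℝ} (hN : N.PosDef)
    {v : Fin n → ℂ} (hv : v ≠ 0) : 0 < (star v ⬝ᵥ (N.map Complex.ofReal *ᵥ v)).re := by
  rw [re_quad]
  have hab : (fun k => (v k).re) ≠ 0 ∨ (fun k => (v k).im) ≠ 0 := by
    by_contra h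
    push_neg at h
    apply hv
    funext k
    have h1 := congrFun h.1 k
    have h2 := congrFun h.2 k
    simp only [Pi.zero_apply] at h1 h2
    exact Complex.ext h1 h2
  rcases hab with h | h
  · refine add_pos_of_pos_of_nonneg ?_ ?_
    · simpa using hN.dotProduct_mulVec_pos h
    · simpa using hN.posSemidef.dotProduct_mulVec_nonneg (fun k => (v k).im)
  · refine add_pos_of_nonneg_of_pos ?_ ?_
    · simpa using hN.posSemidef.dotProduct_mulVec_nonneg (fun k => (v k).re)
    · simpa using hN.dotProduct_mulVec_pos h

lemma mulVec_star_real {m n : ℕ} (N : Matrix (Fin m) (Fin n) ℝ) (v : Fin n → ℂ) :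
    N.map Complex.ofReal *ᵥ star v = star (N.map Complex.ofReal *ᵥ v) := by
  funext j
  simp only [mulVec, dotProduct, map_apply, Pi.star_apply]
  rw [star_sum]
  refine Finset.sum_congr rfl fun k _ => ?_
  simp [Complex.ext_iff]

lemma re_star_dot_self {m : ℕ} (w : Fin m → ℂ) :
    (star w ⬝ᵥ w).re = ∑ i, Complex.normSq (w i) := by
  simp only [dotProduct, Pi.star_apply]
  rw [Complex.re_sum]
  refine Finset.sum_congr rfl fun i _ => ?_
  simp [Complex.mul_re, Complex.normSq_apply]

/-- A matrix with full column rank over `ℝ` has injective `mulVec`. -/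
lemma eq_zero_of_mulVec_eq_zero {m : Type*} [Fintype m] {n : ℕ} (O : Matrix m (Fin n) ℝ)
    (hr : O.rank = n) {x : Fin n → ℝ} (hx : O *ᵥ x = 0) : x = 0 := by
  have h := LinearMap.finrank_range_add_finrank_ker O.mulVecLin
  rw [show Matrix.rank O = Module.finrank ℝ (LinearMap.range O.mulVecLin) from rfl] at hr
  rw [hr, Module.finrank_pi, Fintype.card_fin] at h
  have hker : Module.finrank ℝ (LinearMap.ker O.mulVecLin) = 0 := by omega
  have hbot : LinearMap.ker O.mulVecLin = ⊥ := Submodule.finrank_eq_zero.mp hker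
  have hmem : x ∈ LinearMap.ker O.mulVecLin := by
    simp [LinearMap.mem_ker, Matrix.mulVecLin_apply, hx]
  rw [hbot] at hmem
  simpa using hmem

lemma map_pow_ofReal {n : ℕ} (S : Matrix (Fin n) (Fin n) ℝ) (j : ℕ) :
    (S ^ j).map Complex.ofReal = (S.map Complex.ofReal) ^ j := by
  induction j with
  | zero => simp [Matrix.map_one Complex.ofReal Complex.ofReal_zero Complex.ofReal_one]
  | succ j ih =>
      rw [pow_succ, pow_succ, ← ih]
      exact Matrix.map_mul (f := Complex.ofRealHom)

end HurwitzAux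

def IsHurwitz {q : ℕ} (A : Matrix (Fin q) (Fin q) ℝ) : Prop :=
  ∀ z ∈ spectrum ℂ (A.map Complex.ofReal), z.re < 0

/-- Observability: the observability matrix `col(C₀, C₀S, …, C₀S^{q−1})` has rank `q`. -/
def Observable {q p₀ : ℕ} (C₀ : Matrix (Fin p₀) (Fin q) ℝ) (S : Matrix (Fin q) (Fin q) ℝ) :
    Prop :=
  (Matrix.of fun (ij : Fin q × Fin p₀) (k : Fin q) =>
    (C₀ * S ^ (ij.1 : ℕ)) ij.2 k).rank = q

open HurwitzAux in
/-- If `S` is marginally stable (`P Sᵀ + S P ≤ 0` for some `P ≻ 0`) and `(C₀, S)`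
is observable, then `S − P C₀ᵀ C₀` is Hurwitz. -/
theorem marginally_stable_observer_gain_hurwitz {q p₀ : ℕ}
    (S : Matrix (Fin q) (Fin q) ℝ) (C₀ : Matrix (Fin p₀) (Fin q) ℝ)
    (P : Matrix (Fin q) (Fin q) ℝ) (hPsymm : P.IsSymm) (hP : P.PosDef)
    (hLyap : (-(P * Sᵀ + S * P)).PosSemidef)
    (hobs : Observable C₀ S) :
    IsHurwitz (S - P * C₀ᵀ * C₀) := by
  classical
  intro z hz
  set A : Matrix (Fin q) (Fin q) ℝ := S - P * C₀ᵀ * C₀ with hAdef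
  -- extract an eigenvector
  obtain ⟨v, hv0, hv⟩ : ∃ v ≠ 0, (A.map Complex.ofReal) *ᵥ v = z • v := by
    rw [spectrum.mem_iff, Matrix.isUnit_iff_isUnit_det, isUnit_iff_ne_zero, not_not] at hz
    obtain ⟨v, hv0, hv⟩ := Matrix.exists_mulVec_eq_zero_iff.mpr hz
    refine ⟨v, hv0, ?_⟩
    rw [Matrix.sub_mulVec, sub_eq_zero] at hv
    rw [← hv, Algebra.algebraMap_eq_smul_one, Matrix.smul_mulVec, Matrix.one_mulVec]
  have hPdet : IsUnit P.det := isUnit_iff_ne_zero.mpr hP.det_pos.ne'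
  set Q : Matrix (Fin q) (Fin q) ℝ := P⁻¹ with hQdef
  have hPQ : P * Q = 1 := Matrix.mul_nonsing_inv _ hPdet
  have hQP : Q * P = 1 := Matrix.nonsing_inv_mul _ hPdet
  have hQpos : Q.PosDef := hP.inv
  have hPT : Pᵀ = P := hPsymm.eq
  set Mp : Matrix (Fin q) (Fin q) ℝ := -(P * Sᵀ + S * P) with hMpdef
  -- the key Lyapunov identity
  have key : Q * A + Aᵀ * Q = -(Q * Mp * Q) - (C₀ᵀ * C₀ + C₀ᵀ * C₀) := by
    have e1 : Q * A + Aᵀ * Q =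
        Q * S + Sᵀ * Q - (Q * P) * (C₀ᵀ * C₀) - (C₀ᵀ * C₀) * (P * Q) := by
      simp only [hAdef, Matrix.transpose_sub, Matrix.transpose_mul,
        Matrix.transpose_transpose, hPT, Matrix.mul_assoc]
      noncomm_ring
      simp only [Matrix.mul_assoc]
    have e2 : Q * Mp * Q = -((Q * P) * (Sᵀ * Q) + (Q * S) * (P * Q)) := by
      simp only [hMpdef]
      noncomm_ring
    rw [e1, e2, hQP, hPQ]
    noncomm_ring
  -- matrix-map facts
  have hmapmul : ∀ {m n o : ℕ} (M : Matrix (Fin m) (Fin n) ℝ) (N : Matrix (Fin n) (Fin o) ℝ),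
      (M * N).map Complex.ofReal = M.map Complex.ofReal * N.map Complex.ofReal :=
    fun M N => Matrix.map_mul (f := Complex.ofRealHom)
  have hmapadd : ∀ {m n : ℕ} (M N : Matrix (Fin m) (Fin n) ℝ),
      (M + N).map Complex.ofReal = M.map Complex.ofReal + N.map Complex.ofReal :=
    fun M N => Matrix.map_add _ (fun _ _ => Complex.ofReal_add _ _) M N
  have hmapsub : ∀ {m n : ℕ} (M N : Matrix (Fin m) (Fin n) ℝ),
      (M - N).map Complex.ofReal = M.map Complex.ofReal - N.map Complex.ofReal :=
    fun M N => Matrix.map_sub _ (fun _ _ => Complex.ofReal_sub _ _) M N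
  have hmapneg : ∀ {m n : ℕ} (M : Matrix (Fin m) (Fin n) ℝ),
      (-M).map Complex.ofReal = -(M.map Complex.ofReal) := by
    intro m n M
    ext i j
    simp
  set d : ℝ := (star v ⬝ᵥ (Q.map Complex.ofReal *ᵥ v)).re with hddef
  have hdpos : 0 < d := re_quad_pos hQpos hv0
  -- the quadratic form of the left-hand side
  have hQA : star v ⬝ᵥ ((Q * A).map Complex.ofReal *ᵥ v) =
      z * (star v ⬝ᵥ (Q.map Complex.ofReal *ᵥ v)) := by
    rw [hmapmul, ← Matrix.mulVec_mulVec, hv, Matrix.mulVec_smul, dotProduct_smul, smul_eq_mul]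
  have hAQ : star v ⬝ᵥ ((Aᵀ * Q).map Complex.ofReal *ᵥ v) =
      (starRingEnd ℂ) z * (star v ⬝ᵥ (Q.map Complex.ofReal *ᵥ v)) := by
    rw [hmapmul, ← Matrix.mulVec_mulVec, Matrix.transpose_map,
      Matrix.dotProduct_mulVec, Matrix.vecMul_transpose, mulVec_star_real, hv,
      star_smul, smul_dotProduct, Matrix.dotProduct_mulVec, smul_eq_mul]
    rfl
  have hsum : ((2 * z.re : ℝ) : ℂ) * (star v ⬝ᵥ (Q.map Complex.ofReal *ᵥ v)) =
      star v ⬝ᵥ (((-(Q * Mp * Q) - (C₀ᵀ * C₀ + C₀ᵀ * C₀)).map Complex.ofReal) *ᵥ v) := by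
    rw [← key, hmapadd, Matrix.add_mulVec, dotProduct_add, hQA, hAQ, ← add_mul,
      Complex.add_conj]
  -- the quadratic form of the right-hand side
  set F1 : ℝ := (star v ⬝ᵥ ((Q * Mp * Q).map Complex.ofReal *ᵥ v)).re with hF1def
  set w : Fin p₀ → ℂ := C₀.map Complex.ofReal *ᵥ v with hwdef
  have hCC : star v ⬝ᵥ ((C₀ᵀ * C₀).map Complex.ofReal *ᵥ v) = star w ⬝ᵥ w := by
    rw [hmapmul, ← Matrix.mulVec_mulVec, Matrix.transpose_map,
      Matrix.dotProduct_mulVec, Matrix.vecMul_transpose, mulVec_star_real, hwdef]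
  set F2 : ℝ := ∑ i, Complex.normSq (w i) with hF2def
  have hF2 : (star v ⬝ᵥ ((C₀ᵀ * C₀).map Complex.ofReal *ᵥ v)).re = F2 := by
    rw [hCC, re_star_dot_self]
  have hF1nonneg : 0 ≤ F1 := by
    have hpsd : (Q * Mp * Q).PosSemidef := by
      have h := hLyap.conjTranspose_mul_mul_same Q
      rwa [Matrix.conjTranspose_eq_transpose_of_trivial, hQdef,
        Matrix.transpose_nonsing_inv, hPT] at h
    exact re_quad_nonneg hpsd v
  have hF2nonneg : 0 ≤ F2 := Finset.sum_nonneg fun i _ => Complex.normSq_nonneg _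
  -- the main scalar identity
  have main : 2 * z.re * d = -F1 - (F2 + F2) := by
    have h := congrArg Complex.re hsum
    rw [Complex.re_ofReal_mul, hmapsub, hmapneg, hmapadd, Matrix.sub_mulVec,
      Matrix.neg_mulVec, Matrix.add_mulVec, dotProduct_sub, dotProduct_neg, dotProduct_add,
      Complex.sub_re, Complex.neg_re, Complex.add_re, hF2, ← hF1def, ← hddef] at h
    exact h
  -- conclude
  by_contra hcon
  push_neg at hcon
  have hzre : z.re = 0 := by nlinarith
  have hF2zero : F2 = 0 := by
    rw [hzre] at main
    simp only [mul_zero, zero_mul] at main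
    linarith
  have hw0 : w = 0 := by
    funext i
    have hsum0 : ∑ i, Complex.normSq (w i) = 0 := by rw [← hF2def]; exact hF2zero
    have hz0 : Complex.normSq (w i) = 0 :=
      (Finset.sum_eq_zero_iff_of_nonneg
        (fun j _ => Complex.normSq_nonneg (w j))).mp hsum0 i (Finset.mem_univ i)
    simpa using Complex.normSq_eq_zero.mp hz0
  -- v is an eigenvector of S with C₀ v = 0
  have hXv : ((P * C₀ᵀ * C₀).map Complex.ofReal) *ᵥ v = 0 := by
    rw [hmapmul, ← Matrix.mulVec_mulVec, hmapmul, ← Matrix.mulVec_mulVec, ← hwdef, hw0]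
    simp
  have hSv : S.map Complex.ofReal *ᵥ v = z • v := by
    have h := hv
    rw [hAdef, hmapsub, Matrix.sub_mulVec, hXv, sub_zero] at h
    exact h
  have hpow : ∀ j : ℕ, (S.map Complex.ofReal) ^ j *ᵥ v = z ^ j • v := by
    intro j
    induction j with
    | zero => simp
    | succ j ih =>
        rw [pow_succ, ← Matrix.mulVec_mulVec, hSv, Matrix.mulVec_smul, ih, smul_smul,
          ← pow_succ']
  set O : Matrix (Fin q × Fin p₀) (Fin q) ℝ :=
    Matrix.of (fun (ij : Fin q × Fin p₀) (k : Fin q) => (C₀ * S ^ (ij.1 : ℕ)) ij.2 k)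
    with hOdef
  have hobs' : O.rank = q := hobs
  have hOv : (O.map Complex.ofReal) *ᵥ v = 0 := by
    funext ij
    obtain ⟨j, l⟩ := ij
    have hentry : (O.map Complex.ofReal *ᵥ v) (j, l) =
        (((C₀ * S ^ (j : ℕ)).map Complex.ofReal) *ᵥ v) l := rfl
    rw [hentry, hmapmul, ← Matrix.mulVec_mulVec, map_pow_ofReal, hpow,
      Matrix.mulVec_smul, ← hwdef, hw0]
    simp
  have ha : (fun k => (v k).re) = 0 := by
    refine eq_zero_of_mulVec_eq_zero O hobs' ?_
    funext i
    have h := congrFun hOv i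
    have hre : ((O.map Complex.ofReal *ᵥ v) i).re = (O *ᵥ fun k => (v k).re) i := by
      simp [mulVec, dotProduct, Complex.re_sum, Complex.re_ofReal_mul]
    rw [h] at hre
    simpa using hre.symm
  have hb : (fun k => (v k).im) = 0 := by
    refine eq_zero_of_mulVec_eq_zero O hobs' ?_
    funext i
    have h := congrFun hOv i
    have him : ((O.map Complex.ofReal *ᵥ v) i).im = (O *ᵥ fun k => (v k).im) i := by
      simp [mulVec, dotProduct, Complex.im_sum, Complex.im_ofReal_mul]
    rw [h] at him
    simpa using him.symm
  apply hv0
  funext k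
  have h1 := congrFun ha k
  have h2 := congrFun hb k
  simp only [Pi.zero_apply] at h1 h2
  exact Complex.ext h1 h2
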